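/- arXiv:2402.01554 — 2 statements merged into one kernel-verified Lean document; each statement's English description precedes it below -/
import Mathlib

section
/- A Euclidean triangle all of whose angles are greater than π/4 and whose longest side has length between ℓ/2 and ℓ is 8-bilipschitz homeomorphic, via an affine map, to the equilateral triangle of side length ℓ. -/
/-!
In an oriented plane with area form `ω`, the coordinates of `v = s • x + r • y` are read off as
`s = ω v y / ω x y` and `r = ω x v / ω x y`, and `|ω a b| ≤ ‖a‖ * ‖b‖`. Hence the linear map sending
`x, y` to `x', y'` has norm at most `max ‖x'‖ ‖y'‖ * (‖x‖ + ‖y‖) / |ω x y|`, and symmetrically for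
its inverse. If all angles of the triangle `ABC` exceed `π/4`, they are all below `π/2`, and the
law of sines gives `d ^ 2 ≤ 2 * |ω (B - A) (C - A)|` for the longest side `d`. For the map onto an
equilateral triangle of side `ℓ ≤ 2 * d` this bounds the norm by `ℓ * 2 * d / (d ^ 2 / 2) ≤ 8`, and
the norm of the inverse by `d * 2 * ℓ / (√3 / 2 * ℓ ^ 2) ≤ 8` since `d ≤ ℓ`.
-/

open Real EuclideanGeometry Module

theorem norm_smul_add_smul_le {E : Type*} [SeminormedAddCommGroup E] [NormedSpace ℝ E]
    (x y : E) (s r : ℝ) : ‖s • x + r • y‖ ≤ (|s| + |r|) * max ‖x‖ ‖y‖ := by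
  calc ‖s • x + r • y‖ ≤ |s| * ‖x‖ + |r| * ‖y‖ := by
        simpa [norm_smul] using norm_add_le (s • x) (r • y)
    _ ≤ _ := by nlinarith [le_max_left ‖x‖ ‖y‖, le_max_right ‖x‖ ‖y‖, abs_nonneg s, abs_nonneg r]

namespace Orientation

variable {V : Type*} [NormedAddCommGroup V] [InnerProductSpace ℝ V] [Fact (finrank ℝ V = 2)]
  (o : Orientation ℝ V (Fin 2))

local notation "ω" => o.areaForm

theorem abs_areaForm_eq_norm_mul_norm_mul_sin_angle (x y : V) :
    |ω x y| = ‖x‖ * ‖y‖ * Real.sin (InnerProductGeometry.angle x y) := by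
  rw [mul_comm, InnerProductGeometry.sin_angle_mul_norm_mul_norm, ← Real.sqrt_sq_eq_abs,
    real_inner_self_eq_norm_sq, real_inner_self_eq_norm_sq, ← o.inner_sq_add_areaForm_sq x y]
  ring_nf

theorem areaForm_smul_add_smul_left (x y : V) (s r : ℝ) : ω (s • x + r • y) y = s * ω x y := by
  simp [areaForm_apply_self]

theorem areaForm_smul_add_smul_right (x y : V) (s r : ℝ) : ω x (s • x + r • y) = r * ω x y := by
  simp [areaForm_apply_self]

theorem abs_add_abs_mul_abs_areaForm_le (x y : V) (s r : ℝ) :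
    (|s| + |r|) * |ω x y| ≤ (‖x‖ + ‖y‖) * ‖s • x + r • y‖ := by
  have hs := o.abs_areaForm_le (s • x + r • y) y
  have hr := o.abs_areaForm_le x (s • x + r • y)
  rw [areaForm_smul_add_smul_left, abs_mul] at hs
  rw [areaForm_smul_add_smul_right, abs_mul] at hr
  linarith

theorem abs_areaForm_mul_norm_smul_add_smul_le (x y x' y' : V) (s r : ℝ) :
    |ω x y| * ‖s • x' + r • y'‖ ≤ max ‖x'‖ ‖y'‖ * (‖x‖ + ‖y‖) * ‖s • x + r • y‖ := by
  calc |ω x y| * ‖s • x' + r • y'‖ ≤ |ω x y| * ((|s| + |r|) * max ‖x'‖ ‖y'‖) := by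
        gcongr; exact norm_smul_add_smul_le x' y' s r
    _ = max ‖x'‖ ‖y'‖ * ((|s| + |r|) * |ω x y|) := by ring
    _ ≤ max ‖x'‖ ‖y'‖ * ((‖x‖ + ‖y‖) * ‖s • x + r • y‖) :=
        mul_le_mul_of_nonneg_left (o.abs_add_abs_mul_abs_areaForm_le x y s r) (by positivity)
    _ = _ := by ring

theorem linearIndependent_of_areaForm_ne_zero {x y : V} (h : ω x y ≠ 0) :
    LinearIndependent ℝ ![x, y] := by
  refine LinearIndependent.pair_iff.2 fun s r hsr => ⟨?_, ?_⟩
  · have hs := o.areaForm_smul_add_smul_left x y s r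
    rw [hsr, map_zero, LinearMap.zero_apply, eq_comm, mul_eq_zero] at hs
    exact hs.resolve_right h
  · have hr := o.areaForm_smul_add_smul_right x y s r
    rw [hsr, map_zero, eq_comm, mul_eq_zero] at hr
    exact hr.resolve_right h

theorem exists_linearMap_bilipschitz {x y x' y' : V} (h : ω x y ≠ 0) (h' : ω x' y' ≠ 0) {K : ℝ}
    (hK : max ‖x'‖ ‖y'‖ * (‖x‖ + ‖y‖) ≤ K * |ω x y|)
    (hK' : max ‖x‖ ‖y‖ * (‖x'‖ + ‖y'‖) ≤ K * |ω x' y'|) :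
    ∃ L : V →ₗ[ℝ] V, L x = x' ∧ L y = y' ∧ ∀ v, ‖v‖ ≤ K * ‖L v‖ ∧ ‖L v‖ ≤ K * ‖v‖ := by
  let b := basisOfLinearIndependentOfCardEqFinrank (o.linearIndependent_of_areaForm_ne_zero h)
    (by simp [(Fact.out : finrank ℝ V = 2)])
  have hb : ⇑b = ![x, y] := by simp [b]
  let L := b.constr ℝ ![x', y']
  have hL : ∀ s r : ℝ, L (s • x + r • y) = s • x' + r • y' := by
    intro s r
    rw [← show b 0 = x from congrFun hb 0, ← show b 1 = y from congrFun hb 1, map_add,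
      map_smul, map_smul, b.constr_basis, b.constr_basis]
    rfl
  refine ⟨L, by simpa using hL 1 0, by simpa using hL 0 1, fun v => ?_⟩
  obtain ⟨s, r, rfl⟩ : ∃ s r : ℝ, s • x + r • y = v :=
    ⟨b.repr v 0, b.repr v 1, by simpa [Fin.sum_univ_two, hb] using b.sum_repr v⟩
  rw [hL]
  have hup := o.abs_areaForm_mul_norm_smul_add_smul_le x y x' y' s r
  have hlow := o.abs_areaForm_mul_norm_smul_add_smul_le x' y' x y s r
  constructor
  · refine le_of_mul_le_mul_left ?_ (abs_pos.2 h')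
    nlinarith [norm_nonneg (s • x' + r • y')]
  · refine le_of_mul_le_mul_left ?_ (abs_pos.2 h)
    nlinarith [norm_nonneg (s • x + r • y)]

theorem inner_rotation_self_left (θ : Real.Angle) (x : V) :
    inner ℝ (o.rotation θ x) x = θ.cos * ‖x‖ ^ 2 := by
  simp [rotation_apply, inner_add_left, inner_smul_left]

theorem areaForm_rotation_self_right (θ : Real.Angle) (x : V) :
    ω x (o.rotation θ x) = θ.sin * ‖x‖ ^ 2 := by
  simp [rotation_apply, areaForm_apply_self]

theorem norm_rotation_pi_div_three_sub_self (x : V) :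
    ‖o.rotation (π / 3 : ℝ) x - x‖ = ‖x‖ := by
  have h := norm_sub_sq_real (o.rotation (π / 3 : ℝ) x) x
  rw [o.inner_rotation_self_left, LinearIsometryEquiv.norm_map, Real.Angle.cos_coe,
    cos_pi_div_three] at h
  exact (pow_left_inj₀ (norm_nonneg _) (norm_nonneg _) two_ne_zero).1 (by linear_combination h)

theorem areaForm_sub_sub_rotate (A B C : V) : ω (C - B) (A - B) = ω (B - A) (C - A) := by
  simp only [map_sub, LinearMap.sub_apply, areaForm_apply_self]
  rw [o.areaForm_swap C A, o.areaForm_swap C B]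
  ring

theorem abs_areaForm_sub_sub_eq_dist_mul_dist_mul_sin_angle (A B C : V) :
    |ω (B - A) (C - A)| = dist A B * dist A C * sin (∠ B A C) := by
  rw [o.abs_areaForm_eq_norm_mul_norm_mul_sin_angle, dist_eq_norm', dist_eq_norm']
  rfl

theorem sq_dist_mul_sin_angle_mul_sin_angle_le_abs_areaForm (A B C : V) :
    dist A B ^ 2 * (sin (∠ B A C) * sin (∠ A B C)) ≤ |ω (B - A) (C - A)| := by
  have hsA : 0 ≤ sin (∠ B A C) :=
    sin_nonneg_of_nonneg_of_le_pi (angle_nonneg _ _ _) (angle_le_pi _ _ _)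
  calc dist A B ^ 2 * (sin (∠ B A C) * sin (∠ A B C))
      = dist A B * sin (∠ B A C) * (sin (∠ A C B) * dist A C) := by
        rw [← law_sin C B A, angle_comm C B A, dist_comm B A]; ring
    _ ≤ dist A B * sin (∠ B A C) * (1 * dist A C) := by gcongr; exact sin_le_one _
    _ = |ω (B - A) (C - A)| := by
        rw [abs_areaForm_sub_sub_eq_dist_mul_dist_mul_sin_angle]; ring

theorem sq_max_dist_le_two_mul_abs_areaForm {A B C : V} (hAB : A ≠ B) (hA : π / 4 < ∠ B A C)
    (hB : π / 4 < ∠ A B C) (hC : π / 4 < ∠ A C B) :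
    max (dist A B) (max (dist B C) (dist A C)) ^ 2 ≤ 2 * |ω (B - A) (C - A)| := by
  have hsum := angle_add_angle_add_angle_eq_pi C hAB.symm
  rw [angle_comm B C A, angle_comm C A B] at hsum
  have hsin : ∀ θ, π / 4 < θ → θ < π / 2 → √2 / 2 < sin θ := fun θ h₁ h₂ => by
    rw [← sin_pi_div_four]
    exact sin_lt_sin_of_lt_of_le_pi_div_two (by linarith [pi_pos]) h₂.le h₁
  have hsA := hsin _ hA (by linarith)
  have hsB := hsin _ hB (by linarith)
  have hsC := hsin _ hC (by linarith)
  have hside : ∀ {d s t : ℝ}, d ^ 2 * (s * t) ≤ |ω (B - A) (C - A)| → √2 / 2 < s →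
      √2 / 2 < t → d ^ 2 ≤ 2 * |ω (B - A) (C - A)| := fun {d s t} h hs ht => by
    have hst : 1 / 2 ≤ s * t := by
      nlinarith [sq_sqrt (show (0 : ℝ) ≤ 2 by norm_num), sqrt_nonneg 2]
    nlinarith [sq_nonneg d]
  have hAB' := o.sq_dist_mul_sin_angle_mul_sin_angle_le_abs_areaForm A B C
  have hBC' := o.sq_dist_mul_sin_angle_mul_sin_angle_le_abs_areaForm B C A
  have hCA' := o.sq_dist_mul_sin_angle_mul_sin_angle_le_abs_areaForm C A B
  rw [o.areaForm_sub_sub_rotate, angle_comm C B A, angle_comm B C A] at hBC'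
  rw [o.areaForm_sub_sub_rotate, o.areaForm_sub_sub_rotate, angle_comm C A B, dist_comm C A] at hCA'
  refine (le_sqrt (le_max_of_le_left dist_nonneg) (by positivity)).1 (max_le ?_ (max_le ?_ ?_)) <;>
    refine le_sqrt_of_sq_le ?_
  exacts [hside hAB' hsA hsB, hside hBC' hsB hsC, hside hCA' hsC hsA]

theorem exists_affineMap_to_equilateral {A B C : V} (h : ω (B - A) (C - A) ≠ 0) {ℓ K : ℝ}
    (hℓ : 0 < ℓ) (hK : ℓ * (dist A B + dist A C) ≤ K * |ω (B - A) (C - A)|)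
    (hK' : 4 * max (dist A B) (dist A C) ≤ √3 * K * ℓ) :
    ∃ (f : V →ᵃ[ℝ] V) (P Q R : V), dist P Q = ℓ ∧ dist Q R = ℓ ∧ dist P R = ℓ ∧
      f A = P ∧ f B = Q ∧ f C = R ∧
      ∀ x y, dist x y / K ≤ dist (f x) (f y) ∧ dist (f x) (f y) ≤ K * dist x y := by
  have hBA : B - A ≠ 0 := fun h0 => h (by rw [h0, map_zero, LinearMap.zero_apply])
  set u := (ℓ / ‖B - A‖) • (B - A)
  set w := o.rotation (π / 3 : ℝ) u
  have hu : ‖u‖ = ℓ := by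
    rw [norm_smul, norm_div, norm_norm, norm_of_nonneg hℓ.le,
      div_mul_cancel₀ _ (norm_ne_zero_iff.2 hBA)]
  have hw : ‖w‖ = ℓ := (LinearIsometryEquiv.norm_map _ _).trans hu
  have huw : |ω u w| = √3 / 2 * ℓ ^ 2 := by
    rw [o.areaForm_rotation_self_right, Real.Angle.sin_coe, sin_pi_div_three, hu,
      abs_of_nonneg (by positivity)]
  have hAB : 0 < dist A B := by rwa [dist_eq_norm', norm_pos_iff]
  have hK0 : 0 < K := pos_of_mul_pos_left (hK.trans_lt' (by positivity)) (abs_nonneg _)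
  obtain ⟨L, hLu, hLw, hL⟩ := o.exists_linearMap_bilipschitz (K := K) h
    (abs_pos.1 (by rw [huw]; positivity))
    (by rwa [hu, hw, max_self, ← dist_eq_norm', ← dist_eq_norm'])
    (by rw [hu, hw, huw, ← dist_eq_norm', ← dist_eq_norm']; nlinarith)
  have hLB : L B = L A + u := by rw [← hLu, map_sub, add_sub_cancel]
  have hLC : L C = L A + w := by rw [← hLw, map_sub, add_sub_cancel]
  refine ⟨L.toAffineMap, L A, L B, L C, ?_, ?_, ?_, rfl, rfl, rfl, fun p q => ?_⟩
  · rw [hLB, dist_self_add_right, hu]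
  · rw [hLB, hLC, dist_add_left, dist_comm, dist_eq_norm, o.norm_rotation_pi_div_three_sub_self, hu]
  · rw [hLC, dist_self_add_right, hw]
  · simp only [LinearMap.coe_toAffineMap, dist_eq_norm, ← map_sub]
    exact ⟨(div_le_iff₀' hK0).2 (hL _).1, (hL _).2⟩

end Orientation

/-- A Euclidean triangle all of whose angles are greater than `π/4` and whose longest
side has length between `ℓ/2` and `ℓ` is `8`-bilipschitz homeomorphic, via an affine
map, to the equilateral triangle of side length `ℓ`. -/
theorem eight_bilipschitz_to_equilateral
    (ℓ : ℝ) (hℓ : 0 < ℓ)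
    (A B C : EuclideanSpace ℝ (Fin 2))
    (hangA : π / 4 < ∠ B A C)
    (hangB : π / 4 < ∠ A B C)
    (hangC : π / 4 < ∠ A C B)
    (hlong : ℓ / 2 ≤ max (dist A B) (max (dist B C) (dist A C)) ∧
             max (dist A B) (max (dist B C) (dist A C)) ≤ ℓ) :
    ∃ (f : EuclideanSpace ℝ (Fin 2) →ᵃ[ℝ] EuclideanSpace ℝ (Fin 2))
      (P Q R : EuclideanSpace ℝ (Fin 2)),
      dist P Q = ℓ ∧ dist Q R = ℓ ∧ dist P R = ℓ ∧
      f A = P ∧ f B = Q ∧ f C = R ∧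
      ∀ x y : EuclideanSpace ℝ (Fin 2),
        dist x y / 8 ≤ dist (f x) (f y) ∧ dist (f x) (f y) ≤ 8 * dist x y := by
  have : Fact (finrank ℝ (EuclideanSpace ℝ (Fin 2)) = 2) := ⟨finrank_euclideanSpace_fin⟩
  let o : Orientation ℝ (EuclideanSpace ℝ (Fin 2)) (Fin 2) :=
    (EuclideanSpace.basisFun (Fin 2) ℝ).toBasis.orientation
  obtain ⟨hd₁, hd₂⟩ := hlong
  have hAB : A ≠ B := by
    rintro rfl
    obtain rfl : A = C := by_contra fun h => by linarith [angle_self_of_ne h, pi_pos]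
    simp only [dist_self, max_self] at hd₁
    linarith
  have hS := o.sq_max_dist_le_two_mul_abs_areaForm hAB hangA hangB hangC
  set d := max (dist A B) (max (dist B C) (dist A C))
  have hdAB : dist A B ≤ d := le_max_left _ _
  have hdAC : dist A C ≤ d := (le_max_right _ _).trans (le_max_right _ _)
  have h3 : 1 ≤ √3 := one_le_sqrt.2 (by norm_num)
  exact o.exists_affineMap_to_equilateral (abs_pos.1 (by nlinarith)) hℓ (by nlinarith)
    (by nlinarith [max_le hdAB hdAC])
end

section
/- Each of the following triangles is 4-bilipschitz homeomorphic to the equilateral triangle Δ of side length ℓ: (1) the equilateral triangle of side ℓ/2; (2) the isosceles triangle with apex angle 2π/3 and two sides of length ℓ/2; (3) the right triangle with angles π/2, π/3, π/6 and sides ℓ, (√3/2)ℓ, ℓ/2. -/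
open Real EuclideanGeometry

/-- `S` and `T` are `K`-bilipschitz homeomorphic subsets of the plane. -/
def IsBilipEquiv (K : ℝ) (S T : Set (EuclideanSpace ℝ (Fin 2))) : Prop :=
  ∃ f : EuclideanSpace ℝ (Fin 2) → EuclideanSpace ℝ (Fin 2),
    Set.BijOn f S T ∧
    ∀ x ∈ S, ∀ y ∈ S,
      dist x y / K ≤ dist (f x) (f y) ∧ dist (f x) (f y) ≤ K * dist x y

/-! The affine map taking one triangle's vertices to the other's is bilipschitz with constant
`K` as soon as the two Gram forms `(s, t) ↦ ‖s • (B - A) + t • (C - A)‖²` are comparable up to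
the factor `K²`. These forms depend only on the side lengths (for `Δ` it is
`ℓ² (s² + st + t²)`), so each case reduces to an inequality between binary quadratic forms. -/

section LinearAlgebra

variable {𝕜 V W : Type*} [Field 𝕜] [AddCommGroup V] [Module 𝕜 V] [AddCommGroup W] [Module 𝕜 W]
  {u v : V}

lemma exists_smul_add_smul_eq_of_finrank_eq_two (hV : Module.finrank 𝕜 V = 2)
    (huv : LinearIndependent 𝕜 ![u, v]) (x : V) : ∃ s t : 𝕜, s • u + t • v = x := by
  have hspan := huv.span_eq_top_of_card_eq_finrank (by simp [hV])
  rw [Matrix.range_cons_cons_empty] at hspan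
  exact Submodule.mem_span_pair.mp (hspan ▸ Submodule.mem_top)

lemma exists_linearMap_apply_pair_of_finrank_eq_two (hV : Module.finrank 𝕜 V = 2)
    (huv : LinearIndependent 𝕜 ![u, v]) (u' v' : W) :
    ∃ M : V →ₗ[𝕜] W, M u = u' ∧ M v = v' := by
  let b := basisOfLinearIndependentOfCardEqFinrank huv (by simp [hV])
  refine ⟨b.constr 𝕜 ![u', v'], ?_, ?_⟩
  · simpa [b] using b.constr_basis 𝕜 ![u', v'] 0
  · simpa [b] using b.constr_basis 𝕜 ![u', v'] 1

end LinearAlgebra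

lemma norm_smul_sub_add_smul_sub_sq {V : Type*} [NormedAddCommGroup V] [InnerProductSpace ℝ V]
    (A B C : V) (s t : ℝ) :
    ‖s • (B - A) + t • (C - A)‖ ^ 2 =
      s ^ 2 * dist A B ^ 2 + s * t * (dist A B ^ 2 + dist A C ^ 2 - dist B C ^ 2) +
        t ^ 2 * dist A C ^ 2 := by
  have hBC : B - C = (B - A) - (C - A) := by abel
  rw [dist_comm A B, dist_comm A C, dist_eq_norm, dist_eq_norm, dist_eq_norm, hBC,
    norm_sub_sq_real (B - A), norm_add_sq_real, real_inner_smul_left, real_inner_smul_right,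
    norm_smul, norm_smul, mul_pow, mul_pow, Real.norm_eq_abs, Real.norm_eq_abs, sq_abs, sq_abs]
  ring

local notation "E²" => EuclideanSpace ℝ (Fin 2)

lemma isBilipEquiv_image {K : ℝ} (hK : 0 < K) {f : E² → E²}
    (hf : ∀ x y, dist x y ≤ K * dist (f x) (f y) ∧ dist (f x) (f y) ≤ K * dist x y)
    (S : Set E²) : IsBilipEquiv K S (f '' S) := by
  have hinj : Function.Injective f := fun x y hxy => by
    simpa [hxy] using (hf x y).1
  exact ⟨f, hinj.injOn.bijOn_image, fun x _ y _ => ⟨(div_le_iff₀' hK).mpr (hf x y).1, (hf x y).2⟩⟩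

lemma isBilipEquiv_convexHull_of_linearMap {K : ℝ} (hK : 0 < K) (M : E² →ₗ[ℝ] E²)
    (hM : ∀ v, ‖v‖ ≤ K * ‖M v‖ ∧ ‖M v‖ ≤ K * ‖v‖) {A B C P Q R : E²}
    (hB : M (B - A) = Q - P) (hC : M (C - A) = R - P) :
    IsBilipEquiv K (convexHull ℝ {A, B, C}) (convexHull ℝ {P, Q, R}) := by
  let φ : E² →ᵃ[ℝ] E² := M.toAffineMap + AffineMap.const ℝ E² (P - M A)
  have hφ : ∀ x, φ x = P + M (x - A) := fun x => by
    rw [map_sub]; show M x + (P - M A) = _; abel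
  have himage : φ '' convexHull ℝ {A, B, C} = convexHull ℝ {P, Q, R} := by
    rw [AffineMap.image_convexHull, Set.image_insert_eq, Set.image_insert_eq, Set.image_singleton,
      hφ, hφ, hφ, sub_self, map_zero, hB, hC]
    simp
  rw [← himage]
  refine isBilipEquiv_image hK (fun x y => ?_) _
  have hsub : φ x - φ y = M (x - y) := by rw [hφ, hφ, map_sub, map_sub, map_sub]; abel
  rw [dist_eq_norm, dist_eq_norm, hsub]
  exact hM (x - y)

theorem isBilipEquiv_convexHull_of_sq_norm_le {K : ℝ} (hK : 0 < K) {A B C P Q R : E²}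
    (hPQR : LinearIndependent ℝ ![Q - P, R - P])
    (hle : ∀ s t : ℝ,
      ‖s • (Q - P) + t • (R - P)‖ ^ 2 ≤ K ^ 2 * ‖s • (B - A) + t • (C - A)‖ ^ 2)
    (hge : ∀ s t : ℝ,
      ‖s • (B - A) + t • (C - A)‖ ^ 2 ≤ K ^ 2 * ‖s • (Q - P) + t • (R - P)‖ ^ 2) :
    IsBilipEquiv K (convexHull ℝ {A, B, C}) (convexHull ℝ {P, Q, R}) := by
  have hABC : LinearIndependent ℝ ![B - A, C - A] := by
    refine LinearIndependent.pair_iff.mpr fun s t h => LinearIndependent.pair_iff.mp hPQR s t ?_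
    simpa [h] using hle s t
  have hV : Module.finrank ℝ E² = 2 := finrank_euclideanSpace_fin
  obtain ⟨M, hMB, hMC⟩ := exists_linearMap_apply_pair_of_finrank_eq_two hV hABC (Q - P) (R - P)
  refine isBilipEquiv_convexHull_of_linearMap hK M (fun v => ?_) hMB hMC
  obtain ⟨s, t, rfl⟩ := exists_smul_add_smul_eq_of_finrank_eq_two hV hABC v
  rw [map_add, map_smul, map_smul, hMB, hMC]
  have hsq {a b : ℝ} (ha : 0 ≤ a) (h : a ^ 2 ≤ K ^ 2 * b ^ 2) (hb : 0 ≤ b) : a ≤ K * b :=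
    (pow_le_pow_iff_left₀ ha (by positivity) two_ne_zero).mp (by rwa [mul_pow])
  exact ⟨hsq (norm_nonneg _) (hge s t) (norm_nonneg _), hsq (norm_nonneg _) (hle s t) (norm_nonneg _)⟩

/-- Each of the following is `4`-bilipschitz homeomorphic to the equilateral triangle `Δ`
of side `ℓ`: (1) the equilateral triangle of side `ℓ/2`; (2) the isosceles triangle with
apex angle `2π/3` and two sides of length `ℓ/2`; (3) the right triangle with angles
`π/2, π/3, π/6` and sides `ℓ, (√3/2)ℓ, ℓ/2`. -/
theorem four_bilipschitz_subtriangles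
    (ℓ : ℝ) (hℓ : 0 < ℓ)
    (P Q R : EuclideanSpace ℝ (Fin 2))
    (hΔ : dist P Q = ℓ ∧ dist Q R = ℓ ∧ dist P R = ℓ)
    (A₁ B₁ C₁ : EuclideanSpace ℝ (Fin 2))
    (h₁ : dist A₁ B₁ = ℓ / 2 ∧ dist B₁ C₁ = ℓ / 2 ∧ dist A₁ C₁ = ℓ / 2)
    (A₂ B₂ C₂ : EuclideanSpace ℝ (Fin 2))
    (h₂ : dist A₂ B₂ = ℓ / 2 ∧ dist A₂ C₂ = ℓ / 2 ∧ ∠ B₂ A₂ C₂ = 2 * π / 3)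
    (A₃ B₃ C₃ : EuclideanSpace ℝ (Fin 2))
    (h₃ : dist A₃ B₃ = ℓ ∧ dist B₃ C₃ = Real.sqrt 3 / 2 * ℓ ∧ dist A₃ C₃ = ℓ / 2 ∧
          ∠ A₃ C₃ B₃ = π / 2 ∧ ∠ C₃ A₃ B₃ = π / 3 ∧ ∠ A₃ B₃ C₃ = π / 6) :
    IsBilipEquiv 4 (convexHull ℝ {A₁, B₁, C₁}) (convexHull ℝ {P, Q, R}) ∧
    IsBilipEquiv 4 (convexHull ℝ {A₂, B₂, C₂}) (convexHull ℝ {P, Q, R}) ∧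
    IsBilipEquiv 4 (convexHull ℝ {A₃, B₃, C₃}) (convexHull ℝ {P, Q, R}) := by
  obtain ⟨hPQ, hQR, hPR⟩ := hΔ
  obtain ⟨d₁, d₂, d₃⟩ := h₁
  obtain ⟨e₁, e₂, hangle⟩ := h₂
  obtain ⟨f₁, f₂, f₃, -⟩ := h₃
  have hB₂C₂ : dist B₂ C₂ ^ 2 = 3 / 4 * ℓ ^ 2 := by
    rw [sq, law_cos B₂ A₂ C₂, hangle, dist_comm B₂ A₂, dist_comm C₂ A₂, e₁, e₂,
      show 2 * π / 3 = π - π / 3 by ring, cos_pi_sub, cos_pi_div_three]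
    ring
  have hB₃C₃ : dist B₃ C₃ ^ 2 = 3 / 4 * ℓ ^ 2 := by
    rw [f₂, mul_pow, div_pow, sq_sqrt zero_le_three]; ring
  have hΔ : ∀ s t : ℝ, ‖s • (Q - P) + t • (R - P)‖ ^ 2 = ℓ ^ 2 * (s ^ 2 + s * t + t ^ 2) := by
    intro s t; rw [norm_smul_sub_add_smul_sub_sq, hPQ, hQR, hPR]; ring
  have hPQR : LinearIndependent ℝ ![Q - P, R - P] := by
    refine LinearIndependent.pair_iff.mpr fun s t h => ?_
    have h0 := hΔ s t
    rw [h, norm_zero, zero_pow two_ne_zero, eq_comm, mul_eq_zero] at h0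
    have hst : s ^ 2 + s * t + t ^ 2 = 0 := h0.resolve_left (by positivity)
    constructor <;> nlinarith [sq_nonneg (s + 2 * t), sq_nonneg (2 * s + t)]
  have hℓ2 := sq_nonneg ℓ
  refine ⟨isBilipEquiv_convexHull_of_sq_norm_le four_pos hPQR ?_ ?_,
    isBilipEquiv_convexHull_of_sq_norm_le four_pos hPQR ?_ ?_,
    isBilipEquiv_convexHull_of_sq_norm_le four_pos hPQR ?_ ?_⟩ <;>
  · intro s t
    simp only [hΔ, norm_smul_sub_add_smul_sub_sq, d₁, d₂, d₃, e₁, e₂, hB₂C₂, f₁, hB₃C₃, f₃]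
    linarith [mul_nonneg hℓ2 (sq_nonneg (s + t)), mul_nonneg hℓ2 (sq_nonneg (s - t)),
      mul_nonneg hℓ2 (sq_nonneg (2 * s + t)), mul_nonneg hℓ2 (sq_nonneg s),
      mul_nonneg hℓ2 (sq_nonneg t)]
end
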